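/- Fix a real a > 0 and an integer M ≥ 1. Define 𝒰(z, a) := z·B(z, 1 + a) (B the Euler Beta function), 𝒱_M(z, a) := ((M − 1)/√(2M − 1))·√(𝒰(z, 2a) − 𝒰(z, a)²), and V_M(a) := ((M − 1)/√(2M − 1))·√(Γ(2a + 1) − Γ(a + 1)²). Then, as z → ∞, 𝒰(z, a) + 𝒱_M(z, a) = (V_M(a) + Γ(a + 1))·z^{−a} + O(z^{−a − 1/2}). -/

import Mathlib

/-- Euler Beta function `B(p, q) = Γ(p)Γ(q)/Γ(p+q)`. -/
noncomputable def eulerBeta (p q : ℝ) : ℝ :=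
  Real.Gamma p * Real.Gamma q / Real.Gamma (p + q)

/-- `𝒰(z, a) := z·B(z, 1 + a)`. -/
noncomputable def Ufun (z a : ℝ) : ℝ := z * eulerBeta z (1 + a)

/-- `𝒱_M(z, a) := ((M−1)/√(2M−1))·√(𝒰(z, 2a) − 𝒰(z, a)²)`. -/
noncomputable def Vfun (M : ℕ) (z a : ℝ) : ℝ :=
  ((M : ℝ) - 1) / Real.sqrt (2 * M - 1) * Real.sqrt (Ufun z (2 * a) - Ufun z a ^ 2)

/-- `V_M(a) := ((M−1)/√(2M−1))·√(Γ(2a+1) − Γ(a+1)²)`. -/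
noncomputable def VMconst (M : ℕ) (a : ℝ) : ℝ :=
  ((M : ℝ) - 1) / Real.sqrt (2 * M - 1) *
    Real.sqrt (Real.Gamma (2 * a + 1) - Real.Gamma (a + 1) ^ 2)

/-!
Log-convexity of `Γ` gives Wendel's inequalities
`Γ(x) x^s · x/(x+s) ≤ Γ(x+s) ≤ Γ(x) x^s` for `0 ≤ s ≤ 1`,
so `Γ(x+a)/(Γ(x) x^a) = 1 + O(1/x)`, first for `a ≤ 1` and then, through
`Γ(x+a+1) = (x+a) Γ(x+a)`, for every `a ≥ 0`.
Since `𝒰(z, a) = Γ(a+1) Γ(z+1)/Γ(z+a+1)`, this yields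
`𝒰(z, a) = Γ(a+1) z^{-a} + O(z^{-a-1})`, and hence
`𝒰(z, 2a) - 𝒰(z, a)² = (Γ(2a+1) - Γ(a+1)²) z^{-2a} + O(z^{-2a-1})`.
Taking square roots with `|√x - √y| ≤ √|x - y|` halves the gain in the error exponent,
which is why the remainder of `𝒱_M` is only `O(z^{-a-1/2})`.
-/

open Real Asymptotics Filter Set Topology

lemma rpow_isBigO_rpow_of_le {r s : ℝ} (h : r ≤ s) :
    (fun z : ℝ ↦ z ^ r) =O[atTop] fun z ↦ z ^ s := by
  refine IsBigO.of_bound 1 ((eventually_ge_atTop 1).mono fun z hz ↦ ?_)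
  have hz₀ : 0 < z := by linarith
  rw [one_mul, norm_of_nonneg (rpow_pos_of_pos hz₀ r).le,
    norm_of_nonneg (rpow_pos_of_pos hz₀ s).le]
  exact rpow_le_rpow_of_exponent_le hz h

lemma Real.rpow_sq_eq_rpow_two_mul {z : ℝ} (hz : 0 ≤ z) (r : ℝ) :
    (z ^ r) ^ 2 = z ^ (2 * r) := by
  rw [← rpow_mul_natCast hz]
  ring_nf

lemma exists_bound_of_isBigO_rpow {f : ℝ → ℝ} {r : ℝ} (h : f =O[atTop] fun z ↦ z ^ r) :
    ∃ C > 0, ∃ z₀ > 0, ∀ z ≥ z₀, |f z| ≤ C * z ^ r := by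
  obtain ⟨C, hC, hCw⟩ := h.exists_pos
  obtain ⟨z₁, hz₁⟩ := eventually_atTop.1 (hCw.bound.and (eventually_gt_atTop 0))
  refine ⟨C, hC, max z₁ 1, by positivity, fun z hz ↦ ?_⟩
  obtain ⟨hb, hz₀⟩ := hz₁ z (le_of_max_le_left hz)
  rwa [Real.norm_eq_abs, norm_of_nonneg (rpow_pos_of_pos hz₀ r).le] at hb

lemma div_add_sub_one_isBigO {a : ℝ} (ha : 0 ≤ a) :
    (fun z ↦ z / (z + a) - 1) =O[atTop] fun z ↦ z⁻¹ := by
  refine IsBigO.of_bound a ((eventually_gt_atTop 0).mono fun z hz ↦ ?_)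
  rw [div_sub_one (by linarith : z + a ≠ 0), sub_add_cancel_left, Real.norm_eq_abs, abs_div,
    abs_neg, abs_of_nonneg ha, abs_of_pos (by linarith), norm_inv, Real.norm_eq_abs, abs_of_pos hz,
    ← div_eq_mul_inv]
  gcongr
  linarith

lemma Real.abs_sqrt_sub_sqrt_le (x y : ℝ) : |√x - √y| ≤ √|x - y| := by
  wlog h : y ≤ x generalizing x y
  · rw [abs_sub_comm, abs_sub_comm x y]
    exact this y x (le_of_not_ge h)
  rw [abs_of_nonneg (sub_nonneg.2 (sqrt_le_sqrt h)), abs_of_nonneg (sub_nonneg.2 h)]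
  rcases le_total y 0 with hy | hy
  · rw [sqrt_eq_zero'.2 hy, sub_zero]
    exact sqrt_le_sqrt (by linarith)
  · rw [sub_le_iff_le_add', sqrt_le_iff]
    refine ⟨by positivity, ?_⟩
    nlinarith [sq_sqrt hy, sq_sqrt (sub_nonneg.2 h),
      mul_nonneg (sqrt_nonneg y) (sqrt_nonneg (x - y))]

lemma sqrt_sub_isBigO_of_sub_isBigO {α : Type*} {l : Filter α} {f g h : α → ℝ} {c : ℝ}
    (hfg : (fun x ↦ f x - c * g x ^ 2) =O[l] fun x ↦ h x ^ 2) (hg : 0 ≤ᶠ[l] g) :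
    (fun x ↦ √(f x) - √c * g x) =O[l] h := by
  obtain ⟨K, hK, hKw⟩ := hfg.exists_nonneg
  refine IsBigO.of_bound √K ?_
  filter_upwards [hKw.bound, hg] with x hx hgx
  calc ‖√(f x) - √c * g x‖ = |√(f x) - √(c * g x ^ 2)| := by
        rw [sqrt_mul' c (sq_nonneg _), sqrt_sq hgx, Real.norm_eq_abs]
    _ ≤ √|f x - c * g x ^ 2| := abs_sqrt_sub_sqrt_le _ _
    _ ≤ √(K * ‖h x‖ ^ 2) := sqrt_le_sqrt (by simpa using hx)
    _ = √K * ‖h x‖ := by rw [sqrt_mul hK, sqrt_sq (norm_nonneg _)]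

lemma Real.Gamma_add_le_Gamma_mul_rpow {x s : ℝ} (hx : 0 < x) (hs₀ : 0 ≤ s)
    (hs₁ : s ≤ 1) : Gamma (x + s) ≤ Gamma x * x ^ s := by
  have hΓ := Gamma_pos_of_pos hx
  have hconv := convexOn_log_Gamma.2 (mem_Ioi.2 hx) (mem_Ioi.2 (by linarith : 0 < x + 1))
    (by linarith : 0 ≤ 1 - s) hs₀ (by ring)
  simp only [Function.comp, smul_eq_mul, Gamma_add_one hx.ne', log_mul hx.ne' hΓ.ne',
    show (1 - s) * x + s * (x + 1) = x + s by ring] at hconv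
  rw [← log_le_log_iff (Gamma_pos_of_pos (by linarith)) (by positivity),
    log_mul hΓ.ne' (by positivity), log_rpow hx]
  linarith

lemma Real.Gamma_mul_rpow_mul_div_le_Gamma_add {x s : ℝ} (hx : 0 < x) (hs₀ : 0 ≤ s)
    (hs₁ : s ≤ 1) : Gamma x * x ^ s * (x / (x + s)) ≤ Gamma (x + s) := by
  have hxs : 0 < x + s := by linarith
  have key := Gamma_add_le_Gamma_mul_rpow hxs (by linarith : 0 ≤ 1 - s) (by linarith)
  rw [show x + s + (1 - s) = x + 1 by ring, Gamma_add_one hx.ne', rpow_sub hxs, rpow_one] at key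
  calc Gamma x * x ^ s * (x / (x + s)) ≤ Gamma x * (x + s) ^ s * (x / (x + s)) := by
        gcongr
        linarith
    _ = x * Gamma x / ((x + s) / (x + s) ^ s) := by field_simp
    _ ≤ Gamma (x + s) := div_le_of_le_mul₀ (by positivity) (Gamma_pos_of_pos hxs).le key

noncomputable def gammaRatio (a x : ℝ) : ℝ := Gamma (x + a) / (Gamma x * x ^ a)

lemma abs_gammaRatio_sub_one_le {a x : ℝ} (hx : 0 < x) (ha₀ : 0 ≤ a) (ha₁ : a ≤ 1) :
    |gammaRatio a x - 1| ≤ a / x := by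
  have hden : 0 < Gamma x * x ^ a := by have := Gamma_pos_of_pos hx; positivity
  have hub : gammaRatio a x ≤ 1 :=
    (div_le_one hden).2 (Gamma_add_le_Gamma_mul_rpow hx ha₀ ha₁)
  have hlb : x / (x + a) ≤ gammaRatio a x :=
    (le_div_iff₀ hden).2 (by linarith [Gamma_mul_rpow_mul_div_le_Gamma_add hx ha₀ ha₁])
  have : 1 - x / (x + a) ≤ a / x := by
    rw [one_sub_div (by linarith : x + a ≠ 0), add_sub_cancel_left]
    gcongr; linarith
  rw [abs_sub_comm, abs_of_nonneg (by linarith)]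
  linarith

lemma gammaRatio_add_one {a x : ℝ} (hx : 0 < x) (ha : 0 ≤ a) :
    gammaRatio (a + 1) x = (1 + a * x⁻¹) * gammaRatio a x := by
  have := Gamma_pos_of_pos hx
  rw [gammaRatio, gammaRatio, ← add_assoc, Gamma_add_one (by linarith), rpow_add_one hx.ne']
  field_simp

lemma gammaRatio_sub_one_isBigO_of_le_one {a : ℝ} (ha₀ : 0 ≤ a) (ha₁ : a ≤ 1) :
    (fun x ↦ gammaRatio a x - 1) =O[atTop] fun x ↦ x⁻¹ := by
  refine IsBigO.of_bound a ((eventually_gt_atTop 0).mono fun x hx ↦ ?_)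
  simpa [abs_of_pos hx, div_eq_mul_inv] using abs_gammaRatio_sub_one_le hx ha₀ ha₁

lemma gammaRatio_add_one_sub_one_isBigO {b : ℝ} (hb : 0 ≤ b)
    (hR : (fun x ↦ gammaRatio b x - 1) =O[atTop] fun x ↦ x⁻¹) :
    (fun x ↦ gammaRatio (b + 1) x - 1) =O[atTop] fun x ↦ x⁻¹ := by
  have hR_bdd : (fun x ↦ gammaRatio b x) =O[atTop] fun _ ↦ (1 : ℝ) :=
    (hR.trans_tendsto tendsto_inv_atTop_zero).add_const 1 |>.isBigO_one ℝ |>.congr_left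
      fun x ↦ by simp
  have hsplit : (fun x ↦ (gammaRatio b x - 1) + b * x⁻¹ * gammaRatio b x) =ᶠ[atTop]
      fun x ↦ gammaRatio (b + 1) x - 1 :=
    (eventually_gt_atTop 0).mono fun x hx ↦ by simp only [gammaRatio_add_one hx hb]; ring
  refine (hR.add ?_).congr' hsplit EventuallyEq.rfl
  simpa using ((isBigO_refl (fun x : ℝ ↦ x⁻¹) atTop).const_mul_left b).mul hR_bdd

lemma gammaRatio_sub_one_isBigO {a : ℝ} (ha : 0 ≤ a) :
    (fun x ↦ gammaRatio a x - 1) =O[atTop] fun x ↦ x⁻¹ := by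
  obtain ⟨n, hn⟩ := exists_nat_ge a
  induction n generalizing a with
  | zero => exact gammaRatio_sub_one_isBigO_of_le_one ha (by push_cast at hn; linarith)
  | succ n ih =>
    rcases le_or_gt a 1 with ha₁ | ha₁
    · exact gammaRatio_sub_one_isBigO_of_le_one ha ha₁
    · obtain ⟨b, rfl⟩ : ∃ b, a = b + 1 := ⟨a - 1, by ring⟩
      exact gammaRatio_add_one_sub_one_isBigO (by linarith)
        (ih (by linarith) (by push_cast at hn; linarith))

lemma tendsto_gammaRatio {a : ℝ} (ha : 0 ≤ a) : Tendsto (gammaRatio a) atTop (𝓝 1) :=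
  tendsto_sub_nhds_zero_iff.1 <| (gammaRatio_sub_one_isBigO ha).trans_tendsto tendsto_inv_atTop_zero

lemma Ufun_sub_eq_mul_gammaRatio {z a : ℝ} (hz : 0 < z) (ha : 0 ≤ a) :
    Ufun z a - Gamma (a + 1) * z ^ (-a) =
      Gamma (a + 1) * z ^ (-a) *
        ((z / (z + a) - 1 - (gammaRatio a z - 1)) * (gammaRatio a z)⁻¹) := by
  have := Gamma_pos_of_pos hz
  have := Gamma_pos_of_pos (by linarith : 0 < z + a)
  rw [Ufun, eulerBeta, gammaRatio, show z + (1 + a) = z + a + 1 by ring,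
    Gamma_add_one (by linarith), rpow_neg hz.le, add_comm 1 a]
  field_simp
  ring

lemma Ufun_sub_isBigO {a : ℝ} (ha : 0 ≤ a) :
    (fun z ↦ Ufun z a - Gamma (a + 1) * z ^ (-a)) =O[atTop] fun z ↦ z ^ (-a - 1) := by
  have hRinv := ((tendsto_gammaRatio ha).inv₀ one_ne_zero).isBigO_one ℝ
  have hmain := ((isBigO_refl (fun z : ℝ ↦ z ^ (-a)) atTop).const_mul_left (Gamma (a + 1))).mul
    (((div_add_sub_one_isBigO ha).sub (gammaRatio_sub_one_isBigO ha)).mul hRinv)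
  refine hmain.congr'
    ((eventually_gt_atTop 0).mono fun z hz ↦ (Ufun_sub_eq_mul_gammaRatio hz ha).symm)
    ((eventually_gt_atTop 0).mono fun z hz ↦ ?_)
  simp only [mul_one, rpow_sub hz, rpow_one, div_eq_mul_inv]

lemma Ufun_variance_isBigO {a : ℝ} (ha : 0 ≤ a) :
    (fun z ↦ (Ufun z (2 * a) - Ufun z a ^ 2) -
        (Gamma (2 * a + 1) - Gamma (a + 1) ^ 2) * (z ^ (-a)) ^ 2) =O[atTop]
      fun z ↦ (z ^ (-a - 1 / 2)) ^ 2 := by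
  have hU := Ufun_sub_isBigO ha
  have hU₂ := Ufun_sub_isBigO (by linarith : 0 ≤ 2 * a)
  have hsum : (fun z ↦ Ufun z a + Gamma (a + 1) * z ^ (-a)) =O[atTop] fun z ↦ z ^ (-a) :=
    ((hU.trans (rpow_isBigO_rpow_of_le (by linarith))).add
      ((isBigO_refl _ _).const_mul_left (2 * Gamma (a + 1)))).congr_left fun z ↦ by ring
  have hprod : (fun z ↦ (Ufun z a - Gamma (a + 1) * z ^ (-a)) *
      (Ufun z a + Gamma (a + 1) * z ^ (-a))) =O[atTop] fun z ↦ z ^ (-(2 * a) - 1) :=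
    (hU.mul hsum).congr' EventuallyEq.rfl ((eventually_gt_atTop 0).mono fun z hz ↦ by
      simp only [← rpow_add hz]
      ring_nf)
  refine (hU₂.sub hprod).congr' ((eventually_ge_atTop 0).mono fun z hz ↦ ?_)
    ((eventually_ge_atTop 0).mono fun z hz ↦ ?_)
  · beta_reduce
    rw [show -(2 * a) = 2 * -a by ring, ← rpow_sq_eq_rpow_two_mul hz]
    ring
  · beta_reduce
    rw [rpow_sq_eq_rpow_two_mul hz]
    ring_nf

theorem stmt_12_general (a : ℝ) (ha : 0 < a) (M : ℕ) :
    ∃ C > (0 : ℝ), ∃ z₀ > (0 : ℝ), ∀ z ≥ z₀,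
      |Ufun z a + Vfun M z a - (VMconst M a + Real.Gamma (a + 1)) * z ^ (-a)| ≤
        C * z ^ (-a - 1 / 2) := by
  have hU := (Ufun_sub_isBigO ha.le).trans
    (rpow_isBigO_rpow_of_le (by linarith : -a - 1 ≤ -a - 1 / 2))
  have hV := (sqrt_sub_isBigO_of_sub_isBigO (Ufun_variance_isBigO ha.le)
    ((eventually_ge_atTop 0).mono fun z hz ↦ rpow_nonneg hz (-a))).const_mul_left
    (((M : ℝ) - 1) / √(2 * M - 1))
  refine exists_bound_of_isBigO_rpow ((hU.add hV).congr_left fun z ↦ ?_)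
  simp only [Vfun, VMconst]
  ring

/-- Asymptotic expansion:
`𝒰(z, a) + 𝒱_M(z, a) = (V_M(a) + Γ(a+1))·z^{−a} + O(z^{−a−1/2})` as `z → ∞`. -/
theorem stmt_12 (a : ℝ) (ha : 0 < a) (M : ℕ) (hM : 1 ≤ M) :
    ∃ C > (0 : ℝ), ∃ z₀ > (0 : ℝ), ∀ z ≥ z₀,
      |Ufun z a + Vfun M z a - (VMconst M a + Real.Gamma (a + 1)) * z ^ (-a)| ≤
        C * z ^ (-a - 1 / 2) :=
  stmt_12_general a ha M
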